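/- (Reduced minimization principle, structure of the solution set.) Let 𝔥 be a Euclidean space with spectral decomposition system (𝒳, S, γ, (Λ_a)_{a∈A}), let φ : 𝒳 → (−∞, +∞] be proper (not identically +∞) and S-invariant (φ(s • x) = φ(x) for all s ∈ S, x ∈ 𝒳), and let Y ∈ 𝔥. Set 𝔖 = Argmin_{Z ∈ 𝔥} ( φ(γ(Z)) − ⟨Z, Y⟩ ), S₀ = Argmin_{z ∈ 𝒳} ( φ(z) − ⟨z, γ(Y)⟩ ), and A_Y = {a ∈ A : Y = Λ_a(γ(Y))}. Then: (i) 𝔖 = { Λ_b x : x ∈ S₀, b ∈ A_Y }; (ii) 𝔖 is convex if and only if S₀ is convex; (iii) 𝔖 is a singleton if and only if S₀ is a singleton. -/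

import Mathlib

/-!
Write `g W = φ (γ W) - ⟪W, Y⟫` and `h z = φ z - ⟪z, γ Y⟫` (below: `tilt (φ ∘ γ) Y` and
`tilt φ (γ Y)`), so that `𝔖 = Argmin g` and `S₀ = Argmin h`. Since `γ ∘ Λ b = τ` and `φ ∘ τ = φ`,
`g (Λ b x) = h x` whenever `Y = Λ b (γ Y)`, while `h (γ W) ≤ g W` by the trace inequality. So the
two problems have the same infimum, `x ∈ S₀ ↔ Λ b x ∈ 𝔖`, and `W ∈ 𝔖` iff `γ W ∈ S₀` and
`⟪W, Y⟫ = ⟪γ W, γ Y⟫`. Equality in the trace inequality yields a simultaneous decomposition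
`W = Λ a (γ W)`, `Y = Λ a (γ Y)`, which is (i).

The substance of (ii) is that `S₀` convex implies `𝔖` convex. If `W = α W₁ + β W₂` with `Wᵢ ∈ 𝔖`
and `x = α γ W₁ + β γ W₂ ∈ S₀`, then `⟪γ W, τ c⟫ ≤ ⟪x, τ c⟫` for all `c`, so by Hahn–Banach `γ W`
lies in the convex hull of the compact orbit of `x`. As `⟪γ W, γ Y⟫ = ⟪x, γ Y⟫` is the largest value
of `⟪·, γ Y⟫` on that orbit, only orbit points with this value, which are minimizers, carry weight.
For (iii), if `S₀ = {x₀}` then `γ ≡ x₀` on the convex set `𝔖`; since `γ` preserves norms, strict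
convexity of the norm makes `𝔖` a point.
-/

open scoped InnerProductSpace

/-- A spectral decomposition system `(𝓧, S, γ, (Λ a)_{a ∈ A})` for a Euclidean space `𝓗`,
with spectral-induced ordering mapping `τ`. -/
structure SpectralDecompositionSystem
    (𝓗 : Type*) (𝓧 : Type*) [NormedAddCommGroup 𝓗] [InnerProductSpace ℝ 𝓗]
    [NormedAddCommGroup 𝓧] [InnerProductSpace ℝ 𝓧]
    (S : Type*) [Group S] [MulAction S 𝓧]
    {A : Type*} (γ : 𝓗 → 𝓧) (Λ : A → 𝓧 →ₗ[ℝ] 𝓗) (τ : 𝓧 → 𝓧) : Prop where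
  /-- `S` acts on `𝓧` by linear maps. -/
  smul_add_smul : ∀ (s : S) (c : ℝ) (x y : 𝓧), s • (c • x + y) = c • (s • x) + s • y
  /-- `S` acts on `𝓧` by isometries. -/
  norm_smul : ∀ (s : S) (x : 𝓧), ‖s • x‖ = ‖x‖
  /-- Each `Λ a` is a (linear) isometry. -/
  norm_lambda : ∀ (a : A) (x : 𝓧), ‖Λ a x‖ = ‖x‖
  /-- `τ` is `S`-invariant. -/
  tau_smul : ∀ (s : S) (x : 𝓧), τ (s • x) = τ x
  /-- `τ x` belongs to the orbit `S • x`. -/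
  tau_orbit : ∀ x : 𝓧, ∃ s : S, τ x = s • x
  /-- `γ ∘ Λ a = τ` for all `a ∈ A`. -/
  gamma_lambda : ∀ (a : A) (x : 𝓧), γ (Λ a x) = τ x
  /-- Every element of `𝓗` admits a spectral decomposition. -/
  exists_decomp : ∀ Z : 𝓗, ∃ a : A, Z = Λ a (γ Z)
  /-- Von Neumann-type trace inequality. -/
  inner_le : ∀ Z W : 𝓗, ⟪Z, W⟫_ℝ ≤ ⟪γ Z, γ W⟫_ℝ

variable {𝓗 𝓧 : Type*} [NormedAddCommGroup 𝓗] [InnerProductSpace ℝ 𝓗]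
  [FiniteDimensional ℝ 𝓗] [NormedAddCommGroup 𝓧] [InnerProductSpace ℝ 𝓧]
  [FiniteDimensional ℝ 𝓧] {S : Type*} [Group S] [MulAction S 𝓧]
  {A : Type*} [Nonempty A]

/-- `Argmin g` is the set of minimizers of `g` if `inf g < +∞`, and `∅` otherwise. -/
def ArgminE {V : Type*} (g : V → EReal) : Set V :=
  {x | (⨅ y, g y) < ⊤ ∧ g x = ⨅ y, g y}

theorem exists_fin_finrank_succ_of_mem_convexHull {𝕜 E : Type*} [Field 𝕜] [LinearOrder 𝕜]
    [IsStrictOrderedRing 𝕜] [AddCommGroup E] [Module 𝕜 E] [FiniteDimensional 𝕜 E] {s : Set E}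
    (hs : s.Nonempty) {x : E} (hx : x ∈ convexHull 𝕜 s) :
    ∃ w ∈ stdSimplex 𝕜 (Fin (Module.finrank 𝕜 E + 1)), ∃ z : Fin (Module.finrank 𝕜 E + 1) → E,
      (∀ i, z i ∈ s) ∧ ∑ i, w i • z i = x := by
  classical
  obtain ⟨ι, _, z, w, hzs, hind, hw₀, hw₁, rfl⟩ := eq_pos_convex_span_of_mem_convexHull hx
  obtain ⟨e⟩ : Nonempty (ι ↪ Fin (Module.finrank 𝕜 E + 1)) := by
    rw [Function.Embedding.nonempty_iff_card_le, Fintype.card_fin]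
    exact hind.card_le_finrank_succ.trans (Nat.succ_le_succ (Submodule.finrank_le _))
  have hzero : ∀ j ∉ Set.range e, Function.extend e w 0 j = 0 := fun j hj =>
    Function.extend_apply' _ _ _ hj
  refine ⟨Function.extend e w 0, ⟨fun j => ?_, ?_⟩, Function.extend e z fun _ => hs.some,
    fun j => ?_, ?_⟩
  · by_cases hj : j ∈ Set.range e
    · obtain ⟨i, rfl⟩ := hj
      simpa [e.injective.extend_apply] using (hw₀ i).le
    · simp [hzero j hj]
  · rw [← hw₁]
    exact (Fintype.sum_of_injective e e.injective _ _ hzero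
      fun i => (e.injective.extend_apply _ _ i).symm).symm
  · by_cases hj : j ∈ Set.range e
    · obtain ⟨i, rfl⟩ := hj
      rw [e.injective.extend_apply]
      exact hzs ⟨i, rfl⟩
    · rw [Function.extend_apply' _ _ _ hj]
      exact hs.some_mem
  · refine (Fintype.sum_of_injective e e.injective _ _ (fun j hj => ?_)
      fun i => ?_).symm
    · simp [hzero j hj]
    · simp only [e.injective.extend_apply]

theorem IsCompact.convexHull {E : Type*} [NormedAddCommGroup E] [NormedSpace ℝ E]
    [FiniteDimensional ℝ E] {s : Set E} (hs : IsCompact s) :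
    IsCompact (_root_.convexHull ℝ s) := by
  rcases s.eq_empty_or_nonempty with rfl | hne
  · simp
  set n := Module.finrank ℝ E + 1
  have himage : (fun p : (Fin n → ℝ) × (Fin n → E) => ∑ i, p.1 i • p.2 i) ''
      (stdSimplex ℝ (Fin n) ×ˢ Set.univ.pi fun _ => s) = _root_.convexHull ℝ s := by
    apply Set.Subset.antisymm
    · rintro _ ⟨⟨w, z⟩, ⟨hw, hz⟩, rfl⟩
      exact mem_convexHull_of_exists_fintype w z hw.1 hw.2 (fun i => hz i trivial) rfl
    · intro x hx
      obtain ⟨w, hw, z, hz, rfl⟩ := exists_fin_finrank_succ_of_mem_convexHull hne hx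
      exact ⟨(w, z), ⟨hw, fun i _ => hz i⟩, rfl⟩
  rw [← himage]
  exact ((isCompact_stdSimplex ℝ _).prod (isCompact_univ_pi fun _ => hs)).image (by fun_prop)

theorem mem_convexHull_of_forall_exists_inner_le {E : Type*} [NormedAddCommGroup E]
    [InnerProductSpace ℝ E] [FiniteDimensional ℝ E] {K : Set E} (hK : IsCompact K) {x : E}
    (h : ∀ c, ∃ y ∈ K, ⟪x, c⟫_ℝ ≤ ⟪y, c⟫_ℝ) : x ∈ convexHull ℝ K := by
  by_contra hx
  obtain ⟨f, u, hfK, hfx⟩ :=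
    geometric_hahn_banach_closed_point (convex_convexHull ℝ K) hK.convexHull.isClosed hx
  have hf : ∀ v, ⟪v, (InnerProductSpace.toDual ℝ E).symm f⟫_ℝ = f v := fun v => by
    rw [real_inner_comm, InnerProductSpace.toDual_symm_apply]
  obtain ⟨y, hyK, hxy⟩ := h ((InnerProductSpace.toDual ℝ E).symm f)
  rw [hf, hf] at hxy
  linarith [hfK y (subset_convexHull ℝ K hyK)]

theorem mem_convexHull_sep_eq_of_forall_le {𝕜 E : Type*} [Field 𝕜] [LinearOrder 𝕜]
    [IsStrictOrderedRing 𝕜] [AddCommGroup E] [Module 𝕜 E] {K : Set E} (ℓ : E →ₗ[𝕜] 𝕜) {m : 𝕜}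
    (hK : ∀ y ∈ K, ℓ y ≤ m) {x : E} (hx : x ∈ convexHull 𝕜 K) (hℓx : ℓ x = m) :
    x ∈ convexHull 𝕜 {y ∈ K | ℓ y = m} := by
  classical
  obtain ⟨ι, t, w, z, hw₀, hw₁, hzK, rfl⟩ := (convexHull_eq K).subset hx
  have hgap : ∀ i ∈ t, w i * (m - ℓ (z i)) = 0 := by
    refine (Finset.sum_eq_zero_iff_of_nonneg fun i hi =>
      mul_nonneg (hw₀ i hi) (sub_nonneg.2 (hK _ (hzK i hi)))).1 ?_
    simp only [mul_sub, Finset.sum_sub_distrib, ← Finset.sum_mul, hw₁, one_mul]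
    rw [← hℓx, Finset.centerMass_eq_of_sum_1 t z hw₁, map_sum]
    simp only [map_smul, smul_eq_mul, sub_self]
  rw [← Finset.centerMass_filter_ne_zero]
  refine Finset.centerMass_mem_convexHull _ (fun i hi => hw₀ i (Finset.filter_subset _ _ hi))
    ?_ fun i hi => ?_
  · rw [Finset.sum_filter_ne_zero, hw₁]; exact one_pos
  · obtain ⟨hi, hwi⟩ := Finset.mem_filter.1 hi
    exact ⟨hzK i hi, (sub_eq_zero.1 ((mul_eq_zero.1 (hgap i hi)).resolve_left hwi)).symm⟩

theorem eq_of_norm_eq_of_norm_sq_le_inner {E : Type*} [NormedAddCommGroup E]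
    [InnerProductSpace ℝ E] {x y : E} (hnorm : ‖x‖ = ‖y‖) (hinner : ‖y‖ ^ 2 ≤ ⟪x, y⟫_ℝ) :
    x = y := by
  have : ‖x - y‖ ^ 2 ≤ 0 := by rw [norm_sub_sq_real, hnorm]; linarith
  exact sub_eq_zero.1 (norm_eq_zero.1 (by nlinarith [norm_nonneg (x - y)]))

theorem EReal.sub_coe_le_sub_coe_iff {a : EReal} (ha_bot : a ≠ ⊥) (ha_top : a ≠ ⊤) {r q : ℝ} :
    a - r ≤ a - q ↔ q ≤ r := by
  rw [← EReal.coe_toReal ha_top ha_bot, ← EReal.coe_sub, ← EReal.coe_sub, EReal.coe_le_coe_iff,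
    sub_le_sub_iff_left]

section Tilt

variable {V : Type*} [NormedAddCommGroup V] [InnerProductSpace ℝ V]

noncomputable def tilt (φ : V → EReal) (v z : V) : EReal :=
  φ z - ((⟪z, v⟫_ℝ : ℝ) : EReal)

theorem ne_top_of_mem_argminE_tilt {φ : V → EReal} {v x : V} (hx : x ∈ ArgminE (tilt φ v)) :
    φ x ≠ ⊤ := by
  intro htop
  have : tilt φ v x = ⊤ := by rw [tilt, htop, EReal.top_sub_coe]
  exact hx.1.ne (hx.2 ▸ this)

theorem inner_le_of_mem_argminE_tilt {φ : V → EReal} {v x y : V} (hbot : φ x ≠ ⊥)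
    (hx : x ∈ ArgminE (tilt φ v)) (hy : φ y = φ x) : ⟪y, v⟫_ℝ ≤ ⟪x, v⟫_ℝ := by
  have hle : tilt φ v x ≤ tilt φ v y := hx.2 ▸ iInf_le _ y
  rw [tilt, tilt, hy] at hle
  exact (EReal.sub_coe_le_sub_coe_iff hbot (ne_top_of_mem_argminE_tilt hx)).1 hle

end Tilt

namespace SpectralDecompositionSystem

variable {𝓗 𝓧 : Type*} [NormedAddCommGroup 𝓗] [InnerProductSpace ℝ 𝓗]
  [NormedAddCommGroup 𝓧] [InnerProductSpace ℝ 𝓧] {S : Type*} [Group S] [MulAction S 𝓧]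
  {A : Type*} {γ : 𝓗 → 𝓧} {Λ : A → 𝓧 →ₗ[ℝ] 𝓗} {τ : 𝓧 → 𝓧} {φ : 𝓧 → EReal} {Y : 𝓗}

protected theorem smul_zero (hsys : SpectralDecompositionSystem 𝓗 𝓧 S γ Λ τ) (s : S) :
    s • (0 : 𝓧) = 0 := by
  simpa using hsys.norm_smul s 0

def smulₗᵢ (hsys : SpectralDecompositionSystem 𝓗 𝓧 S γ Λ τ) (s : S) : 𝓧 →ₗᵢ[ℝ] 𝓧 where
  toFun x := s • x
  map_add' x y := by simpa using hsys.smul_add_smul s 1 x y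
  map_smul' c x := by simpa [hsys.smul_zero s] using hsys.smul_add_smul s c x 0
  norm_map' := hsys.norm_smul s

def lambdaₗᵢ (hsys : SpectralDecompositionSystem 𝓗 𝓧 S γ Λ τ) (a : A) : 𝓧 →ₗᵢ[ℝ] 𝓗 :=
  ⟨Λ a, hsys.norm_lambda a⟩

theorem inner_lambda_lambda (hsys : SpectralDecompositionSystem 𝓗 𝓧 S γ Λ τ) (a : A)
    (x y : 𝓧) : ⟪Λ a x, Λ a y⟫_ℝ = ⟪x, y⟫_ℝ :=
  (hsys.lambdaₗᵢ a).inner_map_map x y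

theorem inner_smul_right_eq_inner_inv_smul (hsys : SpectralDecompositionSystem 𝓗 𝓧 S γ Λ τ)
    (s : S) (x y : 𝓧) : ⟪x, s • y⟫_ℝ = ⟪s⁻¹ • x, y⟫_ℝ := by
  have h := (hsys.smulₗᵢ s⁻¹).inner_map_map x (s • y)
  change ⟪s⁻¹ • x, s⁻¹ • s • y⟫_ℝ = _ at h
  rw [← h, inv_smul_smul]

theorem norm_gamma (hsys : SpectralDecompositionSystem 𝓗 𝓧 S γ Λ τ) (Z : 𝓗) :
    ‖γ Z‖ = ‖Z‖ := by
  obtain ⟨a, ha⟩ := hsys.exists_decomp Z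
  conv_rhs => rw [ha, hsys.norm_lambda]

theorem norm_tau (hsys : SpectralDecompositionSystem 𝓗 𝓧 S γ Λ τ) (x : 𝓧) :
    ‖τ x‖ = ‖x‖ := by
  obtain ⟨s, hs⟩ := hsys.tau_orbit x
  rw [hs, hsys.norm_smul]

theorem tau_gamma (hsys : SpectralDecompositionSystem 𝓗 𝓧 S γ Λ τ) (Z : 𝓗) :
    τ (γ Z) = γ Z := by
  obtain ⟨a, ha⟩ := hsys.exists_decomp Z
  rw [← hsys.gamma_lambda a, ← ha]

theorem tau_tau (hsys : SpectralDecompositionSystem 𝓗 𝓧 S γ Λ τ) (x : 𝓧) :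
    τ (τ x) = τ x := by
  obtain ⟨s, hs⟩ := hsys.tau_orbit x
  rw [hs, hsys.tau_smul, hs]

theorem apply_tau (hsys : SpectralDecompositionSystem 𝓗 𝓧 S γ Λ τ) {β : Type*} {φ : 𝓧 → β}
    (hφ : ∀ (s : S) (x : 𝓧), φ (s • x) = φ x) (x : 𝓧) : φ (τ x) = φ x := by
  obtain ⟨s, hs⟩ := hsys.tau_orbit x
  rw [hs, hφ]

theorem inner_le_inner_gamma_tau (hsys : SpectralDecompositionSystem 𝓗 𝓧 S γ Λ τ) (W : 𝓗)
    (a : A) (z : 𝓧) : ⟪W, Λ a z⟫_ℝ ≤ ⟪γ W, τ z⟫_ℝ := by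
  simpa only [hsys.gamma_lambda] using hsys.inner_le W (Λ a z)

theorem inner_le_inner_tau (hsys : SpectralDecompositionSystem 𝓗 𝓧 S γ Λ τ) (x y : 𝓧) :
    ⟪x, y⟫_ℝ ≤ ⟪τ x, τ y⟫_ℝ := by
  obtain ⟨a, -⟩ := hsys.exists_decomp 0
  simpa only [hsys.inner_lambda_lambda, hsys.gamma_lambda] using
    hsys.inner_le_inner_gamma_tau (Λ a x) a y

theorem lipschitzWith_tau (hsys : SpectralDecompositionSystem 𝓗 𝓧 S γ Λ τ) :
    LipschitzWith 1 τ := by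
  refine LipschitzWith.of_dist_le_mul fun x y => ?_
  rw [NNReal.coe_one, one_mul, dist_eq_norm, dist_eq_norm]
  have : ‖τ x - τ y‖ ^ 2 ≤ ‖x - y‖ ^ 2 := by
    rw [norm_sub_sq_real, norm_sub_sq_real, hsys.norm_tau, hsys.norm_tau]
    linarith [hsys.inner_le_inner_tau x y]
  exact pow_le_pow_iff_left₀ (norm_nonneg _) (norm_nonneg _) two_ne_zero |>.1 this

theorem isCompact_setOf_tau_eq [FiniteDimensional ℝ 𝓧]
    (hsys : SpectralDecompositionSystem 𝓗 𝓧 S γ Λ τ) (x : 𝓧) :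
    IsCompact {y | τ y = τ x} := by
  refine Metric.isCompact_of_isClosed_isBounded
    (isClosed_eq hsys.lipschitzWith_tau.continuous continuous_const)
    ((Metric.isBounded_closedBall (x := 0) (r := ‖x‖)).subset fun y hy => ?_)
  rw [Metric.mem_closedBall, dist_zero_right, ← hsys.norm_tau, Set.mem_ofPred.1 hy, hsys.norm_tau]

theorem exists_tau_eq_and_inner_eq (hsys : SpectralDecompositionSystem 𝓗 𝓧 S γ Λ τ) (x c : 𝓧) :
    ∃ y, τ y = τ x ∧ ⟪x, τ c⟫_ℝ = ⟪y, c⟫_ℝ := by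
  obtain ⟨s, hs⟩ := hsys.tau_orbit c
  exact ⟨s⁻¹ • x, hsys.tau_smul _ _, by rw [hs, hsys.inner_smul_right_eq_inner_inv_smul]⟩

theorem inner_gamma_convexComb_le (hsys : SpectralDecompositionSystem 𝓗 𝓧 S γ Λ τ)
    {z : 𝓧} (hz : τ z = z) (W₁ W₂ : 𝓗) {α β : ℝ} (hα : 0 ≤ α) (hβ : 0 ≤ β) :
    ⟪γ (α • W₁ + β • W₂), z⟫_ℝ ≤ α * ⟪γ W₁, z⟫_ℝ + β * ⟪γ W₂, z⟫_ℝ := by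
  obtain ⟨d, hd⟩ := hsys.exists_decomp (α • W₁ + β • W₂)
  have h₁ := hsys.inner_le_inner_gamma_tau W₁ d z
  have h₂ := hsys.inner_le_inner_gamma_tau W₂ d z
  rw [hz] at h₁ h₂
  calc ⟪γ (α • W₁ + β • W₂), z⟫_ℝ = ⟪α • W₁ + β • W₂, Λ d z⟫_ℝ := by
        rw [← hsys.inner_lambda_lambda d, ← hd]
    _ = α * ⟪W₁, Λ d z⟫_ℝ + β * ⟪W₂, Λ d z⟫_ℝ := by
        rw [inner_add_left, real_inner_smul_left, real_inner_smul_left]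
    _ ≤ α * ⟪γ W₁, z⟫_ℝ + β * ⟪γ W₂, z⟫_ℝ := by gcongr

theorem gamma_convexComb_mem_convexHull [FiniteDimensional ℝ 𝓧]
    (hsys : SpectralDecompositionSystem 𝓗 𝓧 S γ Λ τ) (W₁ W₂ : 𝓗) {α β : ℝ} (hα : 0 ≤ α)
    (hβ : 0 ≤ β) :
    γ (α • W₁ + β • W₂) ∈ convexHull ℝ {y | τ y = τ (α • γ W₁ + β • γ W₂)} := by
  refine mem_convexHull_of_forall_exists_inner_le (hsys.isCompact_setOf_tau_eq _) fun c => ?_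
  obtain ⟨y, hy, hyc⟩ := hsys.exists_tau_eq_and_inner_eq (α • γ W₁ + β • γ W₂) c
  refine ⟨y, hy, ?_⟩
  calc ⟪γ (α • W₁ + β • W₂), c⟫_ℝ ≤ ⟪γ (α • W₁ + β • W₂), τ c⟫_ℝ := by
        simpa only [hsys.tau_gamma] using hsys.inner_le_inner_tau (γ (α • W₁ + β • W₂)) c
    _ ≤ α * ⟪γ W₁, τ c⟫_ℝ + β * ⟪γ W₂, τ c⟫_ℝ :=
        hsys.inner_gamma_convexComb_le (hsys.tau_tau c) W₁ W₂ hα hβ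
    _ = ⟪y, c⟫_ℝ := by rw [← hyc, inner_add_left, real_inner_smul_left, real_inner_smul_left]

theorem gamma_add_of_inner_eq (hsys : SpectralDecompositionSystem 𝓗 𝓧 S γ Λ τ) {X Z : 𝓗}
    (h : ⟪X, Z⟫_ℝ = ⟪γ X, γ Z⟫_ℝ) : γ (X + Z) = γ X + γ Z := by
  refine (eq_of_norm_eq_of_norm_sq_le_inner ?_ ?_).symm
  · rw [hsys.norm_gamma (X + Z), ← sq_eq_sq₀ (norm_nonneg _) (norm_nonneg _), norm_add_sq_real,
      norm_add_sq_real, hsys.norm_gamma, hsys.norm_gamma, h]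
  · rw [hsys.norm_gamma, ← real_inner_self_eq_norm_sq, inner_add_left, inner_add_left]
    linarith [hsys.inner_le X (X + Z), hsys.inner_le Z (X + Z)]

theorem exists_decomp_of_inner_eq (hsys : SpectralDecompositionSystem 𝓗 𝓧 S γ Λ τ)
    {X Z : 𝓗} (h : ⟪X, Z⟫_ℝ = ⟪γ X, γ Z⟫_ℝ) : ∃ a, X = Λ a (γ X) ∧ Z = Λ a (γ Z) := by
  obtain ⟨a, ha⟩ := hsys.exists_decomp (X + Z)
  rw [hsys.gamma_add_of_inner_eq h, map_add] at ha
  have hX : X = Λ a (γ X) := by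
    refine eq_of_norm_eq_of_norm_sq_le_inner (by rw [hsys.norm_lambda, hsys.norm_gamma]) ?_
    have hXZ : ⟪X, Λ a (γ Z)⟫_ℝ ≤ ⟪γ X, γ Z⟫_ℝ := by
      simpa only [hsys.tau_gamma] using hsys.inner_le_inner_gamma_tau X a (γ Z)
    have hsplit : ⟪X, X⟫_ℝ + ⟪X, Z⟫_ℝ = ⟪X, Λ a (γ X)⟫_ℝ + ⟪X, Λ a (γ Z)⟫_ℝ := by
      rw [← inner_add_right, ← inner_add_right, ← ha]
    rw [hsys.norm_lambda, hsys.norm_gamma, ← real_inner_self_eq_norm_sq]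
    linarith
  rw [← hX] at ha
  exact ⟨a, hX, add_left_cancel ha⟩

theorem tilt_gamma_le (hsys : SpectralDecompositionSystem 𝓗 𝓧 S γ Λ τ) (W : 𝓗) :
    tilt φ (γ Y) (γ W) ≤ tilt (φ ∘ γ) Y W :=
  EReal.sub_le_sub le_rfl (EReal.coe_le_coe_iff.2 (hsys.inner_le W Y))

theorem tilt_comp_lambda (hsys : SpectralDecompositionSystem 𝓗 𝓧 S γ Λ τ)
    (hφ : ∀ (s : S) (x : 𝓧), φ (s • x) = φ x) {b : A} (hb : Y = Λ b (γ Y)) (x : 𝓧) :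
    tilt (φ ∘ γ) Y (Λ b x) = tilt φ (γ Y) x := by
  have hinner : ⟪Λ b x, Y⟫_ℝ = ⟪x, γ Y⟫_ℝ := by
    rw [← hsys.inner_lambda_lambda b, ← hb]
  rw [tilt, tilt, Function.comp_apply, hsys.gamma_lambda, hsys.apply_tau hφ, hinner]

theorem iInf_tilt_comp_gamma (hsys : SpectralDecompositionSystem 𝓗 𝓧 S γ Λ τ)
    (hφ : ∀ (s : S) (x : 𝓧), φ (s • x) = φ x) :
    ⨅ W, tilt (φ ∘ γ) Y W = ⨅ z, tilt φ (γ Y) z := by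
  obtain ⟨b, hb⟩ := hsys.exists_decomp Y
  refine le_antisymm (le_iInf fun z => ?_) (le_iInf fun W => ?_)
  · exact (iInf_le _ (Λ b z)).trans_eq (hsys.tilt_comp_lambda hφ hb z)
  · exact (iInf_le _ (γ W)).trans (hsys.tilt_gamma_le W)

theorem lambda_mem_argminE_iff (hsys : SpectralDecompositionSystem 𝓗 𝓧 S γ Λ τ)
    (hφ : ∀ (s : S) (x : 𝓧), φ (s • x) = φ x) {b : A} (hb : Y = Λ b (γ Y)) (x : 𝓧) :
    Λ b x ∈ ArgminE (tilt (φ ∘ γ) Y) ↔ x ∈ ArgminE (tilt φ (γ Y)) := by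
  simp only [ArgminE, Set.mem_ofPred_eq, hsys.iInf_tilt_comp_gamma hφ,
    hsys.tilt_comp_lambda hφ hb]

theorem mem_argminE_iff (hsys : SpectralDecompositionSystem 𝓗 𝓧 S γ Λ τ)
    (hbot : ∀ x, φ x ≠ ⊥) (hφ : ∀ (s : S) (x : 𝓧), φ (s • x) = φ x) (W : 𝓗) :
    W ∈ ArgminE (tilt (φ ∘ γ) Y) ↔
      γ W ∈ ArgminE (tilt φ (γ Y)) ∧ ⟪W, Y⟫_ℝ = ⟪γ W, γ Y⟫_ℝ := by
  simp only [ArgminE, Set.mem_ofPred_eq, hsys.iInf_tilt_comp_gamma hφ]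
  constructor
  · rintro ⟨hlt, hW⟩
    have hγW : tilt φ (γ Y) (γ W) = ⨅ z, tilt φ (γ Y) z :=
      le_antisymm (hW ▸ hsys.tilt_gamma_le W) (iInf_le _ _)
    have htop : φ (γ W) ≠ ⊤ := ne_top_of_mem_argminE_tilt ⟨hlt, hγW⟩
    have heq : tilt φ (γ Y) (γ W) = tilt (φ ∘ γ) Y W := hγW.trans hW.symm
    rw [tilt, tilt, Function.comp_apply] at heq
    exact ⟨⟨hlt, hγW⟩, le_antisymm (hsys.inner_le W Y)
      ((EReal.sub_coe_le_sub_coe_iff (hbot _) htop).1 heq.ge)⟩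
  · rintro ⟨⟨hlt, hγW⟩, hinner⟩
    refine ⟨hlt, ?_⟩
    rw [← hγW, tilt, tilt, Function.comp_apply, hinner]

theorem convex_argminE [FiniteDimensional ℝ 𝓧] (hsys : SpectralDecompositionSystem 𝓗 𝓧 S γ Λ τ)
    (hbot : ∀ x, φ x ≠ ⊥) (hφ : ∀ (s : S) (x : 𝓧), φ (s • x) = φ x)
    (hconv : Convex ℝ (ArgminE (tilt φ (γ Y)))) : Convex ℝ (ArgminE (tilt (φ ∘ γ) Y)) := by
  intro W₁ hW₁ W₂ hW₂ α β hα hβ hαβ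
  obtain ⟨hx₁, hinner₁⟩ := (hsys.mem_argminE_iff hbot hφ W₁).1 hW₁
  obtain ⟨hx₂, hinner₂⟩ := (hsys.mem_argminE_iff hbot hφ W₂).1 hW₂
  set x := α • γ W₁ + β • γ W₂
  have hx : x ∈ ArgminE (tilt φ (γ Y)) := hconv hx₁ hx₂ hα hβ hαβ
  have hWY : ⟪α • W₁ + β • W₂, Y⟫_ℝ = ⟪x, γ Y⟫_ℝ := by
    simp only [x, inner_add_left, real_inner_smul_left, hinner₁, hinner₂]
  have hγY : ⟪γ (α • W₁ + β • W₂), γ Y⟫_ℝ = ⟪x, γ Y⟫_ℝ := by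
    refine le_antisymm ?_ (hWY ▸ hsys.inner_le _ Y)
    have := hsys.inner_gamma_convexComb_le (hsys.tau_gamma Y) W₁ W₂ hα hβ
    simpa only [x, inner_add_left, real_inner_smul_left] using this
  have hface : γ (α • W₁ + β • W₂) ∈ convexHull ℝ {y | τ y = τ x ∧ ⟪y, γ Y⟫_ℝ = ⟪x, γ Y⟫_ℝ} := by
    refine mem_convexHull_sep_eq_of_forall_le ((innerₗ 𝓧).flip (γ Y)) (fun y hy => ?_)
      (hsys.gamma_convexComb_mem_convexHull W₁ W₂ hα hβ) hγY
    refine inner_le_of_mem_argminE_tilt (hbot x) hx ?_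
    rw [← hsys.apply_tau hφ y, Set.mem_ofPred.1 hy, hsys.apply_tau hφ]
  have hsub : {y | τ y = τ x ∧ ⟪y, γ Y⟫_ℝ = ⟪x, γ Y⟫_ℝ} ⊆ ArgminE (tilt φ (γ Y)) := by
    rintro y ⟨hτ, hy⟩
    refine ⟨hx.1, ?_⟩
    rw [← hx.2, tilt, tilt, hy, ← hsys.apply_tau hφ y, hτ, hsys.apply_tau hφ]
  refine (hsys.mem_argminE_iff hbot hφ _).2 ⟨convexHull_min hsub hconv hface, ?_⟩
  rw [hWY, hγY]

theorem eq_of_gamma_midpoint_eq (hsys : SpectralDecompositionSystem 𝓗 𝓧 S γ Λ τ)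
    {W₁ W₂ : 𝓗} (h : γ W₁ = γ W₂) (hmid : γ ((1 / 2 : ℝ) • (W₁ + W₂)) = γ W₁) : W₁ = W₂ := by
  by_contra hne
  have hlt := (norm_midpoint_lt_iff (by rw [← hsys.norm_gamma, h, hsys.norm_gamma])).2 hne
  rw [← hsys.norm_gamma, hmid, hsys.norm_gamma] at hlt
  exact hlt.false

theorem argminE_eq (hsys : SpectralDecompositionSystem 𝓗 𝓧 S γ Λ τ)
    (hbot : ∀ x, φ x ≠ ⊥) (hφ : ∀ (s : S) (x : 𝓧), φ (s • x) = φ x) :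
    ArgminE (tilt (φ ∘ γ) Y) =
      {W | ∃ x ∈ ArgminE (tilt φ (γ Y)), ∃ b : A, Y = Λ b (γ Y) ∧ W = Λ b x} := by
  ext W
  constructor
  · intro hW
    obtain ⟨hγW, hinner⟩ := (hsys.mem_argminE_iff hbot hφ W).1 hW
    obtain ⟨a, hWa, hYa⟩ := hsys.exists_decomp_of_inner_eq hinner
    exact ⟨γ W, hγW, a, hYa, hWa⟩
  · rintro ⟨x, hx, b, hb, rfl⟩
    exact (hsys.lambda_mem_argminE_iff hφ hb x).2 hx

theorem convex_argminE_iff [FiniteDimensional ℝ 𝓧]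
    (hsys : SpectralDecompositionSystem 𝓗 𝓧 S γ Λ τ) (hbot : ∀ x, φ x ≠ ⊥)
    (hφ : ∀ (s : S) (x : 𝓧), φ (s • x) = φ x) :
    Convex ℝ (ArgminE (tilt (φ ∘ γ) Y)) ↔ Convex ℝ (ArgminE (tilt φ (γ Y))) := by
  refine ⟨fun hconv => ?_, hsys.convex_argminE hbot hφ⟩
  obtain ⟨b, hb⟩ := hsys.exists_decomp Y
  have hpre : ArgminE (tilt φ (γ Y)) = Λ b ⁻¹' ArgminE (tilt (φ ∘ γ) Y) :=
    Set.ext fun x => (hsys.lambda_mem_argminE_iff hφ hb x).symm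
  rw [hpre]
  exact hconv.linear_preimage (Λ b)

theorem exists_argminE_eq_singleton_iff [FiniteDimensional ℝ 𝓧]
    (hsys : SpectralDecompositionSystem 𝓗 𝓧 S γ Λ τ) (hbot : ∀ x, φ x ≠ ⊥)
    (hφ : ∀ (s : S) (x : 𝓧), φ (s • x) = φ x) :
    (∃ W₀, ArgminE (tilt (φ ∘ γ) Y) = {W₀}) ↔ ∃ x₀, ArgminE (tilt φ (γ Y)) = {x₀} := by
  obtain ⟨b, hb⟩ := hsys.exists_decomp Y
  constructor
  · rintro ⟨W₀, hW₀⟩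
    have hγW₀ := ((hsys.mem_argminE_iff hbot hφ W₀).1 (hW₀ ▸ Set.mem_singleton W₀)).1
    refine ⟨γ W₀, Set.eq_singleton_iff_unique_mem.2 ⟨hγW₀, fun x hx => ?_⟩⟩
    have hΛx := (hsys.lambda_mem_argminE_iff hφ hb x).2 hx
    have hΛγW₀ := (hsys.lambda_mem_argminE_iff hφ hb _).2 hγW₀
    rw [hW₀, Set.mem_singleton_iff] at hΛx hΛγW₀
    exact (hsys.lambdaₗᵢ b).injective (hΛx.trans hΛγW₀.symm)
  · rintro ⟨x₀, hx₀⟩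
    have hconv := (hsys.convex_argminE_iff hbot hφ).2 (hx₀ ▸ convex_singleton x₀)
    have hγ : ∀ W ∈ ArgminE (tilt (φ ∘ γ) Y), γ W = x₀ := fun W hW => by
      simpa only [hx₀, Set.mem_singleton_iff] using ((hsys.mem_argminE_iff hbot hφ W).1 hW).1
    have hΛx₀ := (hsys.lambda_mem_argminE_iff hφ hb x₀).2 (hx₀ ▸ Set.mem_singleton x₀)
    refine ⟨Λ b x₀, Set.eq_singleton_iff_unique_mem.2 ⟨hΛx₀, fun W hW => ?_⟩⟩
    have hmid : (1 / 2 : ℝ) • (W + Λ b x₀) ∈ ArgminE (tilt (φ ∘ γ) Y) := by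
      rw [smul_add]
      exact hconv hW hΛx₀ (by norm_num) (by norm_num) (by norm_num)
    exact hsys.eq_of_gamma_midpoint_eq ((hγ W hW).trans (hγ _ hΛx₀).symm)
      ((hγ _ hmid).trans (hγ W hW).symm)

end SpectralDecompositionSystem

theorem reduced_minimization_argmin_structure_general
    (γ : 𝓗 → 𝓧) (Λ : A → 𝓧 →ₗ[ℝ] 𝓗) (τ : 𝓧 → 𝓧)
    (hsys : SpectralDecompositionSystem 𝓗 𝓧 S γ Λ τ)
    (φ : 𝓧 → EReal) (hbot : ∀ x, φ x ≠ ⊥)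
    (hφ : ∀ (s : S) (x : 𝓧), φ (s • x) = φ x) (Y : 𝓗) :
    (ArgminE (fun W => φ (γ W) - ((⟪W, Y⟫_ℝ : ℝ) : EReal)) =
      {W : 𝓗 | ∃ x ∈ ArgminE (fun z => φ z - ((⟪z, γ Y⟫_ℝ : ℝ) : EReal)),
        ∃ b : A, Y = Λ b (γ Y) ∧ W = Λ b x}) ∧
    (Convex ℝ (ArgminE (fun W => φ (γ W) - ((⟪W, Y⟫_ℝ : ℝ) : EReal))) ↔
      Convex ℝ (ArgminE (fun z => φ z - ((⟪z, γ Y⟫_ℝ : ℝ) : EReal)))) ∧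
    ((∃ W₀ : 𝓗, ArgminE (fun W => φ (γ W) - ((⟪W, Y⟫_ℝ : ℝ) : EReal)) = {W₀}) ↔
      (∃ x₀ : 𝓧, ArgminE (fun z => φ z - ((⟪z, γ Y⟫_ℝ : ℝ) : EReal)) = {x₀})) :=
  ⟨hsys.argminE_eq hbot hφ, hsys.convex_argminE_iff hbot hφ,
    hsys.exists_argminE_eq_singleton_iff hbot hφ⟩

/-- Reduced minimization principle, structure of the solution set. -/
theorem reduced_minimization_argmin_structure
    (γ : 𝓗 → 𝓧) (Λ : A → 𝓧 →ₗ[ℝ] 𝓗) (τ : 𝓧 → 𝓧)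
    (hsys : SpectralDecompositionSystem 𝓗 𝓧 S γ Λ τ)
    (φ : 𝓧 → EReal) (hproper : ∃ x, φ x ≠ ⊤) (hbot : ∀ x, φ x ≠ ⊥)
    (hφ : ∀ (s : S) (x : 𝓧), φ (s • x) = φ x) (Y : 𝓗) :
    (ArgminE (fun W => φ (γ W) - ((⟪W, Y⟫_ℝ : ℝ) : EReal)) =
      {W : 𝓗 | ∃ x ∈ ArgminE (fun z => φ z - ((⟪z, γ Y⟫_ℝ : ℝ) : EReal)),
        ∃ b : A, Y = Λ b (γ Y) ∧ W = Λ b x}) ∧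
    (Convex ℝ (ArgminE (fun W => φ (γ W) - ((⟪W, Y⟫_ℝ : ℝ) : EReal))) ↔
      Convex ℝ (ArgminE (fun z => φ z - ((⟪z, γ Y⟫_ℝ : ℝ) : EReal)))) ∧
    ((∃ W₀ : 𝓗, ArgminE (fun W => φ (γ W) - ((⟪W, Y⟫_ℝ : ℝ) : EReal)) = {W₀}) ↔
      (∃ x₀ : 𝓧, ArgminE (fun z => φ z - ((⟪z, γ Y⟫_ℝ : ℝ) : EReal)) = {x₀})) :=
  reduced_minimization_argmin_structure_general γ Λ τ hsys φ hbot hφ Y
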